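/- arXiv:2101.08057 — 7 statements merged into one kernel-verified Lean document; each statement's English description precedes it below -/
import Mathlib

section
/- The sequence {x_n} is bounded, i.e., there exists R > 0 such that ‖x_n‖ ≤ R for all n. Moreover, for any x* ∈ C with ‖x_{n+1} − x*‖² ≤ ‖w_n − x*‖² − ‖x_{n+1} − w_n‖² for all n ≥ 1, one has ‖x_n − x*‖² ≤ α^n‖x_0 − x*‖² + Γ_1/(1 − α) for all n, where Γ_1 = (1 − α_1)‖x_0 − x*‖². -/
open scoped RealInnerProductSpace
open Filter Topology

private lemma aux_key {H : Type*} [NormedAddCommGroup H] [InnerProductSpace ℝ H]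
    (u v p q : H) (c : ℝ) (hc : 0 ≤ c)
    (h : ‖q‖ ^ 2 ≤ ‖u + c • v‖ ^ 2 - ‖p - c • v‖ ^ 2) :
    ‖q‖ ^ 2 ≤ (1 + c) * ‖u‖ ^ 2 - c * ‖u - v‖ ^ 2 + 2 * c * ‖v‖ ^ 2
      - (1 - c) * ‖p‖ ^ 2 := by
  have e1 : ‖u + c • v‖ ^ 2 = ‖u‖ ^ 2 + 2 * (c * ⟪u, v⟫) + c ^ 2 * ‖v‖ ^ 2 := by
    rw [norm_add_sq_real, real_inner_smul_right, norm_smul, Real.norm_eq_abs,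
      abs_of_nonneg hc]
    ring
  have e2 : ‖p - c • v‖ ^ 2 = ‖p‖ ^ 2 - 2 * (c * ⟪p, v⟫) + c ^ 2 * ‖v‖ ^ 2 := by
    rw [norm_sub_sq_real, real_inner_smul_right, norm_smul, Real.norm_eq_abs,
      abs_of_nonneg hc]
    ring
  have e3 : ‖u - v‖ ^ 2 = ‖u‖ ^ 2 - 2 * ⟪u, v⟫ + ‖v‖ ^ 2 := norm_sub_sq_real u v
  have e4 : ‖p - v‖ ^ 2 = ‖p‖ ^ 2 - 2 * ⟪p, v⟫ + ‖v‖ ^ 2 := norm_sub_sq_real p v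
  nlinarith [sq_nonneg ‖p - v‖, mul_nonneg hc (sq_nonneg ‖p - v‖)]

/-- Boundedness of the iterates, and the quantitative estimate
`‖x_n − x*‖² ≤ αⁿ‖x_0 − x*‖² + Γ₁/(1 − α)` with `Γ₁ = (1 − α₁)‖x_0 − x*‖²`. -/
theorem statement1
    {H : Type*} [NormedAddCommGroup H] [InnerProductSpace ℝ H] [CompleteSpace H]
    (α : ℝ) (αseq : ℕ → ℝ)
    (hαnn : ∀ n, 0 ≤ αseq n)
    (hαmono : ∀ n, αseq n ≤ αseq (n + 1))
    (hαle : ∀ n, αseq n ≤ α) (hα : α < 1 / 3)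
    (x w : ℕ → H) (hx01 : x 0 = x 1)
    (hw : ∀ n, 1 ≤ n → w n = x n + αseq n • (x n - x (n - 1)))
    (hstar : ∃ xs : H, ∀ n, 1 ≤ n →
      ‖x (n + 1) - xs‖ ^ 2 ≤ ‖w n - xs‖ ^ 2 - ‖x (n + 1) - w n‖ ^ 2) :
    (∃ R : ℝ, 0 < R ∧ ∀ n, ‖x n‖ ≤ R) ∧
    ∀ xs : H, (∀ n, 1 ≤ n →
        ‖x (n + 1) - xs‖ ^ 2 ≤ ‖w n - xs‖ ^ 2 - ‖x (n + 1) - w n‖ ^ 2) →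
      ∀ n, ‖x n - xs‖ ^ 2 ≤ α ^ n * ‖x 0 - xs‖ ^ 2 +
        (1 - αseq 1) * ‖x 0 - xs‖ ^ 2 / (1 - α) := by
  have hα0 : (0:ℝ) ≤ α := le_trans (hαnn 0) (hαle 0)
  have hα1 : α < 1 := by linarith
  have h1α : (0:ℝ) < 1 - α := by linarith
  -- main quantitative estimate
  have hmain : ∀ xs : H, (∀ n, 1 ≤ n →
        ‖x (n + 1) - xs‖ ^ 2 ≤ ‖w n - xs‖ ^ 2 - ‖x (n + 1) - w n‖ ^ 2) →
      ∀ n, ‖x n - xs‖ ^ 2 ≤ α ^ n * ‖x 0 - xs‖ ^ 2 +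
        (1 - αseq 1) * ‖x 0 - xs‖ ^ 2 / (1 - α) := by
    intro xs hst
    set a : ℕ → ℝ := fun n => ‖x n - xs‖ ^ 2 with ha
    set s : ℕ → ℝ := fun n => ‖x (n + 1) - x n‖ ^ 2 with hs
    have ha_nn : ∀ n, 0 ≤ a n := fun n => sq_nonneg _
    have hs_nn : ∀ n, 0 ≤ s n := fun n => sq_nonneg _
    have ha1 : a 1 = a 0 := by simp [ha, hx01]
    have hs0 : s 0 = 0 := by simp [hs, ← hx01]
    -- the key recurrence
    have hrec : ∀ m : ℕ, a (m + 2) ≤ (1 + αseq (m + 1)) * a (m + 1)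
        - αseq (m + 1) * a m + 2 * αseq (m + 1) * s m
        - (1 - αseq (m + 1)) * s (m + 1) := by
      intro m
      have hwn : w (m + 1) = x (m + 1) + αseq (m + 1) • (x (m + 1) - x m) := by
        simpa using hw (m + 1) (by omega)
      have h1 : w (m + 1) - xs
          = (x (m + 1) - xs) + αseq (m + 1) • (x (m + 1) - x m) := by
        rw [hwn]; abel
      have h2 : x (m + 2) - w (m + 1)
          = (x (m + 2) - x (m + 1)) - αseq (m + 1) • (x (m + 1) - x m) := by
        rw [hwn]; abel
      have h0 := hst (m + 1) (by omega)
      rw [h1, h2] at h0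
      have key := aux_key (x (m + 1) - xs) (x (m + 1) - x m)
        (x (m + 2) - x (m + 1)) (x (m + 2) - xs) (αseq (m + 1))
        (hαnn (m + 1)) h0
      have huv : x (m + 1) - xs - (x (m + 1) - x m) = x m - xs := by abel
      rw [huv] at key
      simpa [ha, hs] using key
    -- the Lyapunov function
    set Γ : ℕ → ℝ := fun m => a (m + 1) - αseq (m + 1) * a m
      + 2 * αseq (m + 1) * s m with hΓ
    have hΓstep : ∀ m, Γ (m + 1) ≤ Γ m := by
      intro m
      have h0 := hrec m
      have h1 := hαmono (m + 1)
      have h2 := hαle (m + 1)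
      have h3 := hαle (m + 2)
      have h4 := hαnn (m + 1)
      simp only [hΓ]
      nlinarith [ha_nn (m + 1), hs_nn (m + 1)]
    have hΓle : ∀ m, Γ m ≤ Γ 0 := by
      intro m
      induction m with
      | zero => exact le_refl _
      | succ k ih => exact le_trans (hΓstep k) ih
    have hΓ0 : Γ 0 = (1 - αseq 1) * a 0 := by
      simp only [hΓ]
      rw [ha1, hs0]; ring
    have hΓ0nn : 0 ≤ Γ 0 := by
      rw [hΓ0]
      have := hαle 1
      exact mul_nonneg (by linarith) (ha_nn 0)
    -- one-step contraction
    have hstep : ∀ m, a (m + 2) ≤ α * a (m + 1) + Γ 0 := by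
      intro m
      have h1 : a (m + 2) - αseq (m + 2) * a (m + 1)
          + 2 * αseq (m + 2) * s (m + 1) ≤ Γ 0 := hΓle (m + 1)
      have h2 := hαle (m + 2)
      have h3 := hαnn (m + 2)
      nlinarith [mul_le_mul_of_nonneg_right h2 (ha_nn (m + 1)),
        mul_nonneg h3 (hs_nn (m + 1)), ha_nn (m + 1), hs_nn (m + 1)]
    -- final induction
    intro n
    show a n ≤ α ^ n * a 0 + (1 - αseq 1) * a 0 / (1 - α)
    rw [← hΓ0]
    induction n with
    | zero =>
      simp only [pow_zero, one_mul]
      have : 0 ≤ Γ 0 / (1 - α) := div_nonneg hΓ0nn h1α.le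
      linarith
    | succ m ih =>
      match m, ih with
      | 0, _ =>
        rw [ha1, hΓ0]
        have h4 : (1 - α) * a 0 ≤ (1 - αseq 1) * a 0 / (1 - α) := by
          rw [le_div_iff₀ h1α]
          have h1 := hαle 1
          nlinarith [ha_nn 0, mul_le_mul_of_nonneg_right h1 (ha_nn 0),
            mul_nonneg (mul_nonneg hα0 h1α.le) (ha_nn 0)]
        have h5 : α ^ (0 + 1) = α := pow_one α
        rw [h5]
        nlinarith [ha_nn 0]
      | k + 1, ih =>
        have h1 := hstep k
        have h2 : α * a (k + 1) ≤ α * (α ^ (k + 1) * a 0 + Γ 0 / (1 - α)) :=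
          mul_le_mul_of_nonneg_left ih hα0
        have h3 : α * (Γ 0 / (1 - α)) + Γ 0 = Γ 0 / (1 - α) := by
          field_simp
          ring
        calc a (k + 2) ≤ α * a (k + 1) + Γ 0 := h1
          _ ≤ α * (α ^ (k + 1) * a 0 + Γ 0 / (1 - α)) + Γ 0 := by linarith
          _ = α ^ (k + 2) * a 0 + (α * (Γ 0 / (1 - α)) + Γ 0) := by ring
          _ = α ^ (k + 2) * a 0 + Γ 0 / (1 - α) := by rw [h3]
    -- boundedness
  refine ⟨?_, hmain⟩
  obtain ⟨xs, hxs⟩ := hstar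
  have hbd := hmain xs hxs
  set M : ℝ := ‖x 0 - xs‖ ^ 2 + (1 - αseq 1) * ‖x 0 - xs‖ ^ 2 / (1 - α) with hM
  have hMb : ∀ n, ‖x n - xs‖ ^ 2 ≤ M := by
    intro n
    refine le_trans (hbd n) ?_
    have h1 : α ^ n ≤ 1 := pow_le_one₀ hα0 hα1.le
    have h2 : α ^ n * ‖x 0 - xs‖ ^ 2 ≤ ‖x 0 - xs‖ ^ 2 := by
      nlinarith [sq_nonneg ‖x 0 - xs‖]
    linarith
  refine ⟨‖xs‖ + Real.sqrt M + 1, by positivity, fun n => ?_⟩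
  have h1 : ‖x n - xs‖ ≤ Real.sqrt M := by
    have := hMb n
    have h2 : ‖x n - xs‖ = Real.sqrt (‖x n - xs‖ ^ 2) := by
      rw [Real.sqrt_sq (norm_nonneg _)]
    rw [h2]
    exact Real.sqrt_le_sqrt this
  have h2 : ‖x n‖ - ‖xs‖ ≤ ‖x n - xs‖ := norm_sub_norm_le _ _
  linarith
end

section
/- ‖x_{n+1} − w_n‖ → 0 as n → ∞. -/
/-!
Put `a n = ‖x n - x*‖²` and `D n = ‖x (n+1) - x n‖²`. Expanding `‖w n - x*‖²` and bounding
`‖x (n+1) - w n‖²` from below turns the hypothesis into a second-order recursive inequality for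
`a` with a `D`-term, for which `Γ n = a (n+1) - α_{n+1} a n + 2α D n` is a Lyapunov function:
monotonicity of `α_n` and `α < 1/3` give `Γ (n+1) + (1 - 3α) D (n+1) ≤ Γ n`, and `Γ` is bounded
below because `a` is bounded. Hence `∑ D n < ∞`, so `x (n+1) - x n → 0`, and
`x (n+1) - w n = (x (n+1) - x n) - α_n (x n - x (n-1)) → 0`.
-/

open Filter Topology

section InnerProduct

variable {H : Type*} [NormedAddCommGroup H] [InnerProductSpace ℝ H]

lemma norm_add_smul_sub_sq (u v : H) (t : ℝ) :
    ‖u + t • (u - v)‖ ^ 2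
      = (1 + t) * ‖u‖ ^ 2 - t * ‖v‖ ^ 2 + t * (1 + t) * ‖u - v‖ ^ 2 := by
  rw [norm_add_sq_real, real_inner_smul_right, norm_smul, Real.norm_eq_abs, mul_pow, sq_abs,
    inner_sub_right, real_inner_self_eq_norm_sq, norm_sub_sq_real]
  ring

lemma le_norm_sub_smul_sq (u v : H) {t : ℝ} (ht : 0 ≤ t) :
    (1 - t) * ‖u‖ ^ 2 - t * (1 - t) * ‖v‖ ^ 2 ≤ ‖u - t • v‖ ^ 2 := by
  rw [norm_sub_sq_real, real_inner_smul_right, norm_smul, Real.norm_eq_abs, mul_pow, sq_abs]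
  linarith [mul_le_mul_of_nonneg_left (real_inner_le_norm u v) ht,
    mul_nonneg ht (sq_nonneg (‖u‖ - ‖v‖))]

lemma norm_sub_sq_le_of_inertial_step {x₀ x₁ x₂ p : H} {t : ℝ} (ht : 0 ≤ t)
    (h : ‖x₂ - p‖ ^ 2
      ≤ ‖x₁ + t • (x₁ - x₀) - p‖ ^ 2 - ‖x₂ - (x₁ + t • (x₁ - x₀))‖ ^ 2) :
    ‖x₂ - p‖ ^ 2 ≤ (1 + t) * ‖x₁ - p‖ ^ 2 - t * ‖x₀ - p‖ ^ 2
      + 2 * t * ‖x₁ - x₀‖ ^ 2 - (1 - t) * ‖x₂ - x₁‖ ^ 2 := by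
  have hw : ‖x₁ + t • (x₁ - x₀) - p‖ ^ 2
      = (1 + t) * ‖x₁ - p‖ ^ 2 - t * ‖x₀ - p‖ ^ 2 + t * (1 + t) * ‖x₁ - x₀‖ ^ 2 := by
    have h := norm_add_smul_sub_sq (x₁ - p) (x₀ - p) t
    rw [sub_sub_sub_cancel_right] at h
    rw [← h, sub_add_eq_add_sub]
  have hstep := le_norm_sub_smul_sq (x₂ - x₁) (x₁ - x₀) ht
  rw [show x₂ - x₁ - t • (x₁ - x₀) = x₂ - (x₁ + t • (x₁ - x₀)) by abel] at hstep
  linarith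

lemma norm_sub_inertial_le {x₀ x₁ x₂ : H} {t : ℝ} (ht : 0 ≤ t) :
    ‖x₂ - (x₁ + t • (x₁ - x₀))‖ ≤ ‖x₂ - x₁‖ + t * ‖x₁ - x₀‖ := by
  calc ‖x₂ - (x₁ + t • (x₁ - x₀))‖ = ‖(x₂ - x₁) - t • (x₁ - x₀)‖ := by rw [sub_sub]
    _ ≤ ‖x₂ - x₁‖ + ‖t • (x₁ - x₀)‖ := norm_sub_le _ _
    _ = ‖x₂ - x₁‖ + t * ‖x₁ - x₀‖ := by rw [norm_smul, Real.norm_of_nonneg ht]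

end InnerProduct

lemma le_max_of_le_add_mul {u : ℕ → ℝ} {c r : ℝ} (hr₀ : 0 ≤ r) (hr₁ : r < 1)
    (hu : ∀ n, u (n + 1) ≤ c + r * u n) (n : ℕ) : u n ≤ max (u 0) (c / (1 - r)) := by
  set M := max (u 0) (c / (1 - r))
  have hcM : c ≤ (1 - r) * M := by
    rw [← div_le_iff₀' (sub_pos.2 hr₁)]
    exact le_max_right _ _
  induction n with
  | zero => exact le_max_left _ _
  | succ n ih => linarith [hu n, mul_le_mul_of_nonneg_left ih hr₀]

lemma summable_of_add_mul_le {Γ D : ℕ → ℝ} {c m : ℝ} (hc : 0 < c) (hD : ∀ n, 0 ≤ D n)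
    (hΓ : ∀ n, Γ (n + 1) + c * D n ≤ Γ n) (hm : ∀ n, m ≤ Γ n) : Summable D := by
  have htelescope : ∀ N, Γ N + c * ∑ k ∈ Finset.range N, D k ≤ Γ 0 := by
    intro N
    induction N with
    | zero => simp
    | succ N ih =>
      rw [Finset.sum_range_succ, mul_add]
      linarith [hΓ N]
  refine summable_of_sum_range_le hD (c := (Γ 0 - m) / c) fun N => ?_
  rw [le_div_iff₀' hc]
  linarith [htelescope N, hm N]

lemma summable_of_inertial_recursion {a D s : ℕ → ℝ} {α : ℝ} (ha : ∀ n, 0 ≤ a n)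
    (hD : ∀ n, 0 ≤ D n) (hD₀ : D 0 = 0) (hs₀ : ∀ n, 0 ≤ s n) (hs : Monotone s)
    (hsα : ∀ n, s n ≤ α) (hα : α < 1 / 3)
    (hrec : ∀ n, a (n + 2) ≤ (1 + s n) * a (n + 1) - s n * a n
      + 2 * s n * D n - (1 - s n) * D (n + 1)) :
    Summable D := by
  have hα₀ : 0 ≤ α := (hs₀ 0).trans (hsα 0)
  set Γ : ℕ → ℝ := fun n => a (n + 1) - s n * a n + 2 * α * D n
  have hdescent : ∀ n, Γ (n + 1) + (1 - 3 * α) * D (n + 1) ≤ Γ n := fun n => by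
    linarith [hrec n, mul_le_mul_of_nonneg_right (hs n.le_succ) (ha (n + 1)),
      mul_le_mul_of_nonneg_right (hsα n) (hD n), mul_le_mul_of_nonneg_right (hsα n) (hD (n + 1))]
  have hΓ₀ : Γ 0 ≤ a 1 := by
    show a 1 - s 0 * a 0 + 2 * α * D 0 ≤ a 1
    rw [hD₀]
    linarith [mul_nonneg (hs₀ 0) (ha 0)]
  have hΓ_anti : Antitone Γ :=
    antitone_nat_of_succ_le fun n => by
      linarith [hdescent n, mul_nonneg (by linarith : (0 : ℝ) ≤ 1 - 3 * α) (hD (n + 1))]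
  have ha_bdd := le_max_of_le_add_mul hα₀ (by linarith) (c := a 1) (u := a) fun n => by
    linarith [hΓ_anti (Nat.zero_le n), mul_le_mul_of_nonneg_right (hsα n) (ha n),
      mul_nonneg hα₀ (hD n)]
  refine (summable_nat_add_iff 1).mp <|
    summable_of_add_mul_le (by linarith) (fun n => hD (n + 1)) hdescent
      (m := -(α * max (a 0) (a 1 / (1 - α)))) fun n => ?_
  linarith [ha (n + 1), mul_le_mul_of_nonneg_right (hsα n) (ha n),
    mul_le_mul_of_nonneg_left (ha_bdd n) hα₀, mul_nonneg hα₀ (hD n)]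

theorem statement2_general
    {H : Type*} [NormedAddCommGroup H] [InnerProductSpace ℝ H]
    (α : ℝ) (αseq : ℕ → ℝ)
    (hαnn : ∀ n, 0 ≤ αseq n)
    (hαmono : ∀ n, αseq n ≤ αseq (n + 1))
    (hαle : ∀ n, αseq n ≤ α) (hα : α < 1 / 3)
    (x w : ℕ → H) (hx01 : x 0 = x 1)
    (hw : ∀ n, 1 ≤ n → w n = x n + αseq n • (x n - x (n - 1)))
    (hstar : ∃ xs : H, ∀ n, 1 ≤ n →
      ‖x (n + 1) - xs‖ ^ 2 ≤ ‖w n - xs‖ ^ 2 - ‖x (n + 1) - w n‖ ^ 2) :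
    Tendsto (fun n => ‖x (n + 1) - w n‖) atTop (nhds 0) := by
  obtain ⟨xs, hxs⟩ := hstar
  have hw' (n : ℕ) : w (n + 1) = x (n + 1) + αseq (n + 1) • (x (n + 1) - x n) :=
    hw (n + 1) (Nat.le_add_left 1 n)
  have hsum : Summable fun n => ‖x (n + 1) - x n‖ ^ 2 := by
    refine summable_of_inertial_recursion (a := fun n => ‖x n - xs‖ ^ 2)
      (s := fun n => αseq (n + 1)) (fun _ => sq_nonneg _) (fun _ => sq_nonneg _) (by simp [hx01])
      (fun _ => hαnn _) (monotone_nat_of_le_succ fun _ => hαmono _) (fun _ => hαle _) hα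
      fun n => ?_
    have h := hxs (n + 1) (Nat.le_add_left 1 n)
    rw [hw'] at h
    exact norm_sub_sq_le_of_inertial_step (hαnn _) h
  have hstep : Tendsto (fun n => ‖x (n + 1) - x n‖) atTop (𝓝 0) := by
    simpa [Function.comp_def, Real.sqrt_sq (norm_nonneg _)] using
      (Real.continuous_sqrt.tendsto 0).comp hsum.tendsto_atTop_zero
  refine (tendsto_add_atTop_iff_nat 1).mp <| squeeze_zero (fun _ => norm_nonneg _) (fun n => ?_)
    (by simpa using ((tendsto_add_atTop_iff_nat 1).mpr hstep).add (hstep.const_mul α))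
  rw [hw']
  exact (norm_sub_inertial_le (hαnn _)).trans <| by
    gcongr
    exact hαle _

/-- `‖x_{n+1} − w_n‖ → 0` as `n → ∞`. -/
theorem statement2
    {H : Type*} [NormedAddCommGroup H] [InnerProductSpace ℝ H] [CompleteSpace H]
    (α : ℝ) (αseq : ℕ → ℝ)
    (hαnn : ∀ n, 0 ≤ αseq n)
    (hαmono : ∀ n, αseq n ≤ αseq (n + 1))
    (hαle : ∀ n, αseq n ≤ α) (hα : α < 1 / 3)
    (x w : ℕ → H) (hx01 : x 0 = x 1)
    (hw : ∀ n, 1 ≤ n → w n = x n + αseq n • (x n - x (n - 1)))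
    (hstar : ∃ xs : H, ∀ n, 1 ≤ n →
      ‖x (n + 1) - xs‖ ^ 2 ≤ ‖w n - xs‖ ^ 2 - ‖x (n + 1) - w n‖ ^ 2) :
    Tendsto (fun n => ‖x (n + 1) - w n‖) atTop (nhds 0) :=
  statement2_general α αseq hαnn hαmono hαle hα x w hx01 hw hstar
end

section
/- The series ∑_{n≥1} ‖x_{n+1} − x_n‖² converges; in fact ∑_{n=1}^∞ ‖x_{n+1} − x_n‖² ≤ (1/(1 − 3α) + (1 − α_1)/(1 − α))‖x_0 − x*‖². -/
open scoped RealInnerProductSpace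
open Filter Topology

lemma aux_inner3 {H : Type*} [NormedAddCommGroup H] [InnerProductSpace ℝ H]
    (a b p q : H) (t : ℝ) (ht : 0 ≤ t)
    (h : ‖a‖ ^ 2 ≤ ‖b + t • p‖ ^ 2 - ‖q - t • p‖ ^ 2) :
    ‖a‖ ^ 2 ≤ (1 + t) * ‖b‖ ^ 2 - t * ‖b - p‖ ^ 2 + 2 * t * ‖p‖ ^ 2 - (1 - t) * ‖q‖ ^ 2 := by
  have h1 : ‖b + t • p‖ ^ 2 = ‖b‖ ^ 2 + 2 * (t * ⟪b, p⟫) + t ^ 2 * ‖p‖ ^ 2 := by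
    rw [norm_add_sq_real, real_inner_smul_right, norm_smul, Real.norm_eq_abs, mul_pow, sq_abs]
  have h2 : ‖q - t • p‖ ^ 2 = ‖q‖ ^ 2 - 2 * (t * ⟪q, p⟫) + t ^ 2 * ‖p‖ ^ 2 := by
    rw [norm_sub_sq_real, real_inner_smul_right, norm_smul, Real.norm_eq_abs, mul_pow, sq_abs]
  have h3 : ‖b - p‖ ^ 2 = ‖b‖ ^ 2 - 2 * ⟪b, p⟫ + ‖p‖ ^ 2 := norm_sub_sq_real b p
  have h4 : 2 * ⟪q, p⟫ ≤ ‖q‖ ^ 2 + ‖p‖ ^ 2 := by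
    have := sq_nonneg (‖q - p‖)
    have h5 : ‖q - p‖ ^ 2 = ‖q‖ ^ 2 - 2 * ⟪q, p⟫ + ‖p‖ ^ 2 := norm_sub_sq_real q p
    linarith
  have e1 : t * (2 * ⟪b, p⟫) = t * (‖b‖ ^ 2 + ‖p‖ ^ 2 - ‖b - p‖ ^ 2) := by
    rw [show (2:ℝ) * ⟪b, p⟫ = ‖b‖ ^ 2 + ‖p‖ ^ 2 - ‖b - p‖ ^ 2 by linarith]
  have e2 : t * (2 * ⟪q, p⟫) ≤ t * (‖q‖ ^ 2 + ‖p‖ ^ 2) := mul_le_mul_of_nonneg_left h4 ht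
  nlinarith [h, h1, h2, e1, e2]


/-- Summability of `‖x_{n+1} − x_n‖²` with the explicit bound
`∑ ‖x_{n+1} − x_n‖² ≤ (1/(1 − 3α) + (1 − α₁)/(1 − α))‖x_0 − x*‖²`.
(Since `x 0 = x 1`, the `n = 0` term vanishes, so the sum over all `n : ℕ`
agrees with the sum over `n ≥ 1`.) -/
theorem statement3
    {H : Type*} [NormedAddCommGroup H] [InnerProductSpace ℝ H] [CompleteSpace H]
    (α : ℝ) (αseq : ℕ → ℝ)
    (hαnn : ∀ n, 0 ≤ αseq n)
    (hαmono : ∀ n, αseq n ≤ αseq (n + 1))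
    (hαle : ∀ n, αseq n ≤ α) (hα : α < 1 / 3)
    (x w : ℕ → H) (hx01 : x 0 = x 1)
    (hw : ∀ n, 1 ≤ n → w n = x n + αseq n • (x n - x (n - 1)))
    (xs : H)
    (hstar : ∀ n, 1 ≤ n →
      ‖x (n + 1) - xs‖ ^ 2 ≤ ‖w n - xs‖ ^ 2 - ‖x (n + 1) - w n‖ ^ 2) :
    Summable (fun n => ‖x (n + 1) - x n‖ ^ 2) ∧
      ∑' n : ℕ, ‖x (n + 1) - x n‖ ^ 2 ≤
        (1 / (1 - 3 * α) + (1 - αseq 1) / (1 - α)) * ‖x 0 - xs‖ ^ 2 := by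
  have hα0 : 0 ≤ α := le_trans (hαnn 0) (hαle 0)
  have hα1 : α < 1 := by linarith
  have hc : (0:ℝ) < 1 - 3 * α := by linarith
  have hca : (0:ℝ) < 1 - α := by linarith
  set d : ℕ → ℝ := fun n => ‖x (n + 1) - x n‖ ^ 2 with hd
  set φ : ℕ → ℝ := fun n => ‖x n - xs‖ ^ 2 with hφ
  have hφnn : ∀ n, 0 ≤ φ n := fun n => sq_nonneg _
  have hdnn : ∀ n, 0 ≤ d n := fun n => sq_nonneg _
  have hd0 : d 0 = 0 := by simp [hd, ← hx01]
  have hφ10 : φ 1 = φ 0 := by simp [hφ, ← hx01]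
  -- key inequality
  have key : ∀ m : ℕ, φ (m + 2) ≤ (1 + αseq (m + 1)) * φ (m + 1) - αseq (m + 1) * φ m
      + 2 * αseq (m + 1) * d m - (1 - αseq (m + 1)) * d (m + 1) := by
    intro m
    have h1 := hstar (m + 1) (Nat.le_add_left 1 m)
    have h2 := hw (m + 1) (Nat.le_add_left 1 m)
    have hb : w (m + 1) - xs = (x (m + 1) - xs) + αseq (m + 1) • (x (m + 1) - x m) := by
      rw [h2]; simp; abel
    have hq : x (m + 2) - w (m + 1) = (x (m + 2) - x (m + 1)) - αseq (m + 1) • (x (m + 1) - x m) := by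
      rw [h2]; simp; abel
    have h3 : ‖x (m + 2) - xs‖ ^ 2 ≤
        ‖(x (m + 1) - xs) + αseq (m + 1) • (x (m + 1) - x m)‖ ^ 2
        - ‖(x (m + 2) - x (m + 1)) - αseq (m + 1) • (x (m + 1) - x m)‖ ^ 2 := by
      rw [← hb, ← hq]; exact h1
    have h4 := aux_inner3 (x (m + 2) - xs) (x (m + 1) - xs) (x (m + 1) - x m)
      (x (m + 2) - x (m + 1)) (αseq (m + 1)) (hαnn (m + 1)) h3
    have h5 : (x (m + 1) - xs) - (x (m + 1) - x m) = x m - xs := by abel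
    rw [h5] at h4
    simpa [hφ, hd] using h4
  clear_value φ d
  set G : ℕ → ℝ := fun n => φ (n + 1) - αseq (n + 1) * φ n + 2 * αseq (n + 1) * d n with hG
  clear_value G
  have hG0 : G 0 = (1 - αseq 1) * φ 0 := by
    simp [hG, hφ10, hd0]; ring
  have hG0nn : 0 ≤ G 0 := by
    rw [hG0]; exact mul_nonneg (by linarith [hαle 1]) (hφnn 0)
  have hGstep : ∀ n, G (n + 1) + (1 - 3 * α) * d (n + 1) ≤ G n := by
    intro n
    have hk := key n
    have h1 : (αseq (n + 1) - αseq (n + 2)) * φ (n + 1) ≤ 0 :=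
      mul_nonpos_of_nonpos_of_nonneg (by linarith [hαmono (n + 1)]) (hφnn (n + 1))
    have h2 : (αseq (n + 1) + 2 * αseq (n + 2) - 3 * α) * d (n + 1) ≤ 0 :=
      mul_nonpos_of_nonpos_of_nonneg (by linarith [hαle (n + 1), hαle (n + 2)]) (hdnn (n + 1))
    simp only [hG]
    linarith [hk, h1, h2]
  have hGsum : ∀ N, G N + (1 - 3 * α) * ∑ k ∈ Finset.range N, d (k + 1) ≤ G 0 := by
    intro N
    induction N with
    | zero => simp
    | succ N ih =>
      rw [Finset.sum_range_succ]
      have := hGstep N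
      linarith [this, ih]
  have hsumnn : ∀ N, 0 ≤ ∑ k ∈ Finset.range N, d (k + 1) := fun N =>
    Finset.sum_nonneg fun k _ => hdnn (k + 1)
  have hGle : ∀ N, G N ≤ G 0 := by
    intro N
    linarith [hGsum N, mul_nonneg hc.le (hsumnn N)]
  have hφstep : ∀ n, φ (n + 1) ≤ G 0 + α * φ n := by
    intro n
    have h1 := hGle n
    have h2 : (αseq (n + 1) - α) * φ n ≤ 0 :=
      mul_nonpos_of_nonpos_of_nonneg (by linarith [hαle (n + 1)]) (hφnn n)
    have h3 : 0 ≤ αseq (n + 1) * d n := mul_nonneg (hαnn (n + 1)) (hdnn n)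
    have hGn : φ (n + 1) = G n + αseq (n + 1) * φ n - 2 * αseq (n + 1) * d n := by
      simp only [hG]; ring
    linarith [h1, h2, h3, hGn]
  have hφbd : ∀ n, (1 - α) * φ n ≤ G 0 := by
    intro n
    induction n with
    | zero =>
      rw [hG0]
      exact mul_le_mul_of_nonneg_right (by linarith [hαle 1]) (hφnn 0)
    | succ n ih =>
      linarith [mul_le_mul_of_nonneg_left (hφstep n) hca.le,
        mul_le_mul_of_nonneg_left ih hα0]
  -- summability
  have hpartial : ∀ N, ∑ k ∈ Finset.range N, d k ≤ G 0 / ((1 - α) * (1 - 3 * α)) := by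
    intro N
    have hB : 0 < (1 - α) * (1 - 3 * α) := mul_pos hca hc
    rw [le_div_iff₀ hB]
    match N with
    | 0 => simpa using hG0nn
    | (M + 1) =>
      rw [Finset.sum_range_succ']
      have e : ∑ k ∈ Finset.range M, d (k + 1) + d 0 = ∑ k ∈ Finset.range M, d (k + 1) := by
        rw [hd0, add_zero]
      rw [e]
      have h1 := hGsum M
      have h2 : -(α * φ M) ≤ G M := by
        have h3 : αseq (M + 1) * φ M ≤ α * φ M :=
          mul_le_mul_of_nonneg_right (hαle (M + 1)) (hφnn M)
        have h4 : 0 ≤ αseq (M + 1) * d M := mul_nonneg (hαnn (M + 1)) (hdnn M)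
        simp only [hG]
        nlinarith [hφnn (M + 1)]
      have h5 := hφbd M
      -- (1-3α) S ≤ G0 - G M ≤ G0 + α φ M  and (1-α) α φ M ≤ α G0
      have h6 : α * ((1 - α) * φ M) ≤ α * G 0 := mul_le_mul_of_nonneg_left h5 hα0
      have h13 : (1 - 3 * α) * ∑ k ∈ Finset.range M, d (k + 1) ≤ G 0 + α * φ M := by
        linarith [h1, h2]
      have h14 := mul_le_mul_of_nonneg_left h13 hca.le
      nlinarith [h14, h6]
  have hsummable : Summable d := summable_of_sum_range_le hdnn hpartial
  refine ⟨hsummable, ?_⟩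
  -- tsum bound
  have hmain : (1 - 3 * α) * ∑' n, d n ≤ G 0 := by
    by_contra hcon
    push_neg at hcon
    set ε : ℝ := (1 - 3 * α) * ∑' n, d n - G 0 with hε
    clear_value ε
    have hεpos : 0 < ε := by rw [hε]; linarith
    -- choose K s.t. partial sums are within ε/2 of tsum
    have htend : Tendsto (fun N => ∑ k ∈ Finset.range N, d k) atTop (𝓝 (∑' n, d n)) :=
      hsummable.hasSum.tendsto_sum_nat
    have hev : ∀ᶠ N in atTop, ∑' n, d n - ε / 2 < ∑ k ∈ Finset.range N, d k := by
      have := htend.eventually (eventually_gt_nhds (by linarith : ∑' n, d n - ε / 2 < ∑' n, d n))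
      exact this
    obtain ⟨K, hK⟩ := (eventually_atTop).1 hev
    -- find N ≥ K with φ (N+1) ≥ α φ N - ε/2
    have hCN : ∃ N, K ≤ N ∧ α * φ N - ε / 2 ≤ φ (N + 1) := by
      by_contra hno
      push_neg at hno
      have hdec : ∀ j, φ (K + j) ≤ α ^ j * φ K := by
        intro j
        induction j with
        | zero => simp
        | succ j ih =>
          have h1 := hno (K + j) (Nat.le_add_right K j)
          have h2 : α * φ (K + j) ≤ α * (α ^ j * φ K) := mul_le_mul_of_nonneg_left ih hα0
          have : φ (K + j + 1) < α * φ (K + j) - ε / 2 := h1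
          calc φ (K + (j + 1)) = φ (K + j + 1) := by ring_nf
            _ ≤ α ^ (j + 1) * φ K := by rw [pow_succ]; nlinarith [hεpos]
      have htend2 : Tendsto (fun j => α ^ j * φ K) atTop (𝓝 0) := by
        have h := (tendsto_pow_atTop_nhds_zero_of_lt_one hα0 hα1).mul_const (φ K)
        rw [zero_mul] at h
        exact h
      obtain ⟨j, hj⟩ := (htend2.eventually_lt_const (show (0:ℝ) < ε / 2 by linarith)).exists
      have h1 := hno (K + j) (Nat.le_add_right K j)
      have h2 : α * φ (K + j) ≤ α * (α ^ j * φ K) := mul_le_mul_of_nonneg_left (hdec j) hα0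
      have hnn : 0 ≤ α ^ j * φ K := mul_nonneg (pow_nonneg hα0 j) (hφnn K)
      have h3 : α * (α ^ j * φ K) ≤ α ^ j * φ K := by
        calc α * (α ^ j * φ K) ≤ 1 * (α ^ j * φ K) := mul_le_mul_of_nonneg_right hα1.le hnn
          _ = α ^ j * φ K := one_mul _
      have := hφnn (K + j + 1)
      linarith
    obtain ⟨N, hNK, hNφ⟩ := hCN
    have hGN : -(ε / 2) ≤ G N := by
      have h3 : αseq (N + 1) * φ N ≤ α * φ N :=
        mul_le_mul_of_nonneg_right (hαle (N + 1)) (hφnn N)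
      have h4 : 0 ≤ αseq (N + 1) * d N := mul_nonneg (hαnn (N + 1)) (hdnn N)
      simp only [hG]
      linarith [hNφ, h3, h4]
    have hclose := hK (N + 1) (le_trans hNK (Nat.le_succ N))
    have h1 := hGsum N
    have heq : ∑ k ∈ Finset.range (N + 1), d k = ∑ k ∈ Finset.range N, d (k + 1) := by
      rw [Finset.sum_range_succ', hd0, add_zero]
    rw [heq] at hclose
    -- (1-3α)(S - ε/2) ≤ (1-3α) ∑ range N d (k+1) ≤ G0 - G N ≤ G0 + ε/2
    have h7 : (1 - 3 * α) * (∑' n, d n - ε / 2) < (1 - 3 * α) * ∑ k ∈ Finset.range N, d (k + 1) :=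
      mul_lt_mul_of_pos_left hclose hc
    have hc1 : 1 - 3 * α ≤ 1 := by linarith
    linarith [h7, h1, hGN, hεpos, hε, hc1, mul_nonneg hα0 hεpos.le]
  -- conclude
  have hfin : ∑' n, d n ≤ G 0 / (1 - 3 * α) := (le_div_iff₀ hc).2 (by linarith [hmain])
  have h8 : G 0 / (1 - 3 * α) ≤ (1 / (1 - 3 * α) + (1 - αseq 1) / (1 - α)) * φ 0 := by
    rw [hG0]
    have h9 : 0 ≤ φ 0 := hφnn 0
    have h10 : (1 - αseq 1) / (1 - 3 * α) ≤ 1 / (1 - 3 * α) :=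
      (div_le_div_iff_of_pos_right hc).2 (by linarith [hαnn 1])
    have h11 : 0 ≤ (1 - αseq 1) / (1 - α) := div_nonneg (by linarith [hαle 1]) hca.le
    have h12 : (1 - αseq 1) * φ 0 / (1 - 3 * α) = ((1 - αseq 1) / (1 - 3 * α)) * φ 0 := by
      ring
    rw [h12]
    exact mul_le_mul_of_nonneg_right (by linarith) h9
  have hφ0 : φ 0 = ‖x 0 - xs‖ ^ 2 := by rw [hφ]
  calc ∑' n, d n ≤ G 0 / (1 - 3 * α) := hfin
    _ ≤ (1 / (1 - 3 * α) + (1 - αseq 1) / (1 - α)) * φ 0 := h8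
    _ = (1 / (1 - 3 * α) + (1 - αseq 1) / (1 - α)) * ‖x 0 - xs‖ ^ 2 := by rw [hφ0]
end

section
/- For all n ≥ 1, ‖x_{n+1} − x*‖² ≤ (1 + α_n)‖x_n − x*‖² − α_n‖x_{n−1} − x*‖² − (1 − α_n)‖x_{n+1} − x_n‖² + 2α_n‖x_n − x_{n−1}‖². -/
open scoped RealInnerProductSpace
open Filter Topology

/-- The key one-step estimate:
`‖x_{n+1} − x*‖² ≤ (1 + α_n)‖x_n − x*‖² − α_n‖x_{n−1} − x*‖²
   − (1 − α_n)‖x_{n+1} − x_n‖² + 2α_n‖x_n − x_{n−1}‖²`. -/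
theorem statement4
    {H : Type*} [NormedAddCommGroup H] [InnerProductSpace ℝ H] [CompleteSpace H]
    (αseq : ℕ → ℝ) (hα : ∀ n, 0 ≤ αseq n ∧ αseq n ≤ 1)
    (x w : ℕ → H)
    (hw : ∀ n, 1 ≤ n → w n = x n + αseq n • (x n - x (n - 1)))
    (xs : H)
    (hstar : ∀ n, 1 ≤ n →
      ‖x (n + 1) - xs‖ ^ 2 ≤ ‖w n - xs‖ ^ 2 - ‖x (n + 1) - w n‖ ^ 2) :
    ∀ n, 1 ≤ n →
      ‖x (n + 1) - xs‖ ^ 2 ≤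
        (1 + αseq n) * ‖x n - xs‖ ^ 2 - αseq n * ‖x (n - 1) - xs‖ ^ 2
          - (1 - αseq n) * ‖x (n + 1) - x n‖ ^ 2
          + 2 * αseq n * ‖x n - x (n - 1)‖ ^ 2 := by
  intro n hn
  obtain ⟨hα0, hα1⟩ := hα n
  have hw' := hw n hn
  have hstar' := hstar n hn
  set α := αseq n with hαdef
  set a := x n - xs with ha
  set b := x (n - 1) - xs with hb
  set c := x (n + 1) - xs with hc
  set v := x n - x (n - 1) with hv
  have hvab : v = a - b := by simp [hv, ha, hb]
  have hca : x (n + 1) - x n = c - a := by simp [hc, ha]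
  have hwxs : w n - xs = a + α • v := by
    rw [hw']; simp [ha, hv]; abel
  have hxw : x (n + 1) - w n = (c - a) - α • v := by
    rw [hw']; simp [hc, ha, hv]; abel
  have hsm : ‖α • v‖ ^ 2 = α ^ 2 * ‖v‖ ^ 2 := by
    rw [norm_smul]; simp [mul_pow, sq_abs]
  have h1 : ‖a + α • v‖ ^ 2 = ‖a‖ ^ 2 + 2 * (α * ⟪a, v⟫) + α ^ 2 * ‖v‖ ^ 2 := by
    rw [norm_add_sq_real, real_inner_smul_right, hsm]
  have h2 : ‖(c - a) - α • v‖ ^ 2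
      = ‖c - a‖ ^ 2 - 2 * (α * ⟪c - a, v⟫) + α ^ 2 * ‖v‖ ^ 2 := by
    rw [norm_sub_sq_real, real_inner_smul_right, hsm]
  have h3 : ‖v‖ ^ 2 = ‖a‖ ^ 2 - 2 * ⟪a, b⟫ + ‖b‖ ^ 2 := by
    rw [hvab, norm_sub_sq_real]
  have h3' : ⟪a, v⟫ = ‖a‖ ^ 2 - ⟪a, b⟫ := by
    rw [hvab, inner_sub_right, real_inner_self_eq_norm_sq]
  have h4 : 0 ≤ ‖(c - a) - v‖ ^ 2 := sq_nonneg _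
  have h4' : ‖(c - a) - v‖ ^ 2 = ‖c - a‖ ^ 2 - 2 * ⟪c - a, v⟫ + ‖v‖ ^ 2 := by
    rw [norm_sub_sq_real]
  have h5 : ‖c - a‖ ^ 2 = ‖c‖ ^ 2 - 2 * ⟪c, a⟫ + ‖a‖ ^ 2 := by
    rw [norm_sub_sq_real]
  rw [hwxs, hxw] at hstar'
  rw [hca]
  nlinarith [hstar', h1, h2, h3, h3', h4, h4', sq_nonneg ‖v‖, sq_nonneg ‖c - a‖,
    mul_nonneg hα0 (sq_nonneg ‖v‖), mul_nonneg hα0 (sq_nonneg ‖c - a‖)]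
end

section
/- Let {w_k} be a bounded sequence in H converging weakly to a point p, let z_k = P_C(w_k − F(w_k)), and suppose ‖w_k − z_k‖ → 0 as k → ∞. Then p belongs to the solution set SOL, i.e., p ∈ C and ⟨F(p), y − p⟩ ≥ 0 for all y ∈ C. -/
/-!
Since `w_k − z_k → 0` strongly, `z_k ⇀ p` as well; the `z_k` lie in the weakly closed set `C`,
so `p ∈ C`. For `v ∈ C`, the projection inequality at `z_k` together with monotonicity gives
`⟨F v, v − z_k⟩ ≥ ⟨(w_k − z_k) − (F w_k − F z_k), v − z_k⟩`, whose right side tends to `0` by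
uniform continuity of `F` on the bounded set of all `w_k, z_k`. In the limit `⟨F v, v − p⟩ ≥ 0`
for all `v ∈ C` (Minty's formulation), and continuity of `F` along segments from `p` turns this
into `⟨F p, v − p⟩ ≥ 0`.
-/

open scoped RealInnerProductSpace Uniformity
open Filter Topology Set Bornology

section

variable {ι : Type*} {l : Filter ι}

theorem UniformContinuousOn.tendsto_dist_zero {α β : Type*} [PseudoMetricSpace α]
    [PseudoMetricSpace β] {f : α → β} {s : Set α} (hf : UniformContinuousOn f s)
    {u v : ι → α} (hu : ∀ k, u k ∈ s) (hv : ∀ k, v k ∈ s)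
    (h : Tendsto (fun k => dist (u k) (v k)) l (𝓝 0)) :
    Tendsto (fun k => dist (f (u k)) (f (v k))) l (𝓝 0) := by
  have huv : Tendsto (fun k => (u k, v k)) l (𝓤 α ⊓ 𝓟 (s ×ˢ s)) :=
    tendsto_inf.2 ⟨tendsto_uniformity_iff_dist_tendsto_zero.2 h,
      tendsto_principal.2 (Eventually.of_forall fun k => ⟨hu k, hv k⟩)⟩
  exact tendsto_uniformity_iff_dist_tendsto_zero.1 (Tendsto.comp hf huv)

variable {H : Type*} [NormedAddCommGroup H] [InnerProductSpace ℝ H]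

theorem tendsto_inner_zero_of_tendsto_zero_of_isBounded {a b : ι → H}
    (ha : Tendsto a l (𝓝 0)) (hb : IsBounded (range b)) :
    Tendsto (fun k => ⟪a k, b k⟫) l (𝓝 0) := by
  obtain ⟨M, hM⟩ := isBounded_iff_forall_norm_le.1 hb
  exact squeeze_zero_norm (fun k => abs_real_inner_le_norm (a k) (b k))
    ((tendsto_norm_zero.comp ha).zero_mul_isBoundedUnder_le
      (isBoundedUnder_of ⟨M, fun k => by simpa using hM _ ⟨k, rfl⟩⟩))

def TendstoWeakly (u : ι → H) (l : Filter ι) (p : H) : Prop :=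
  ∀ f : H, Tendsto (fun k => ⟪f, u k⟫) l (𝓝 ⟪f, p⟫)

theorem TendstoWeakly.of_tendsto_sub {u v : ι → H} {p : H} (hu : TendstoWeakly u l p)
    (huv : Tendsto (fun k => u k - v k) l (𝓝 0)) : TendstoWeakly v l p := by
  intro f
  have hf : Tendsto (fun k => ⟪f, u k - v k⟫) l (𝓝 0) := by
    simpa using (tendsto_const_nhds (x := f)).inner huv
  simpa [inner_sub_right] using (hu f).sub hf

/-- `p` coincides with its projection onto `C`, because `⟨p − P_C p, u_k − P_C p⟩ ≤ 0` passes
to the weak limit. -/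
theorem TendstoWeakly.mem_of_isClosed_of_convex [CompleteSpace H] [l.NeBot] {C : Set H}
    (hCcl : IsClosed C) (hCcx : Convex ℝ C) {u : ι → H} {p : H} (hu : TendstoWeakly u l p)
    (hmem : ∀ k, u k ∈ C) : p ∈ C := by
  obtain ⟨k₀⟩ := l.nonempty_of_neBot
  obtain ⟨q, hqC, hq⟩ :=
    exists_norm_eq_iInf_of_complete_convex ⟨u k₀, hmem k₀⟩ hCcl.isComplete hCcx p
  have hqproj := (norm_eq_iInf_iff_real_inner_le_zero hCcx hqC).1 hq
  have hlim : Tendsto (fun k => ⟪p - q, u k - q⟫) l (𝓝 ⟪p - q, p - q⟫) := by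
    simpa only [inner_sub_right] using (hu (p - q)).sub tendsto_const_nhds
  have hpq : ⟪p - q, p - q⟫ ≤ 0 :=
    le_of_tendsto hlim (Eventually.of_forall fun k => hqproj _ (hmem k))
  rwa [sub_eq_zero.1 (real_inner_self_nonpos.1 hpq)]

theorem inner_nonneg_of_tendsto_residual [l.NeBot] {F : H → H}
    (hFmono : ∀ x y : H, 0 ≤ ⟪F x - F y, x - y⟫) {w z : ι → H} {p v : H}
    (hzproj : ∀ k, ⟪(w k - F (w k)) - z k, v - z k⟫ ≤ 0) (hz : TendstoWeakly z l p)
    (hzbdd : IsBounded (range z))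
    (hres : Tendsto (fun k => (w k - z k) - (F (w k) - F (z k))) l (𝓝 0)) :
    0 ≤ ⟪F v, v - p⟫ := by
  have hlow : ∀ k, ⟪(w k - z k) - (F (w k) - F (z k)), v - z k⟫ ≤ ⟪F v, v - z k⟫ := by
    intro k
    have hproj := hzproj k
    have hmono := hFmono v (z k)
    rw [show (w k - F (w k)) - z k = ((w k - z k) - (F (w k) - F (z k))) - F (z k) by abel,
      inner_sub_left] at hproj
    rw [inner_sub_left] at hmono
    linarith
  have hvz : IsBounded (range fun k => v - z k) :=
    (isBounded_sub isBounded_singleton hzbdd).subset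
      (range_subset_iff.2 fun k => sub_mem_sub rfl (mem_range_self k))
  have hlim : Tendsto (fun k => ⟪F v, v - z k⟫) l (𝓝 ⟪F v, v - p⟫) := by
    simpa only [inner_sub_right] using tendsto_const_nhds.sub (hz (F v))
  exact le_of_tendsto_of_tendsto'
    (tendsto_inner_zero_of_tendsto_zero_of_isBounded hres hvz) hlim hlow

theorem inner_nonneg_of_forall_inner_nonneg {C : Set H} (hCcx : Convex ℝ C) {F : H → H}
    {p : H} (hp : p ∈ C) (hF : ContinuousAt F p) (h : ∀ v ∈ C, 0 ≤ ⟪F v, v - p⟫) :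
    ∀ v ∈ C, 0 ≤ ⟪F p, v - p⟫ := by
  intro v hv
  have hseg : Tendsto (fun t : ℝ => p + t • (v - p)) (𝓝[>] 0) (𝓝 p) := by
    have hcont : Continuous fun t : ℝ => p + t • (v - p) := by fun_prop
    simpa using (hcont.tendsto 0).mono_left nhdsWithin_le_nhds
  refine ge_of_tendsto ((hF.tendsto.comp hseg).inner tendsto_const_nhds) ?_
  filter_upwards [Ioo_mem_nhdsGT one_pos] with t ht
  have hmem := h _ (hCcx.add_smul_sub_mem hp hv ⟨ht.1.le, ht.2.le⟩)
  rw [add_sub_cancel_left, real_inner_smul_right] at hmem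
  exact nonneg_of_mul_nonneg_right hmem ht.1

end

theorem statement8_general
    {H : Type*} [NormedAddCommGroup H] [InnerProductSpace ℝ H] [CompleteSpace H]
    (C : Set H) (hCcl : IsClosed C) (hCcx : Convex ℝ C)
    (F : H → H)
    (hFmono : ∀ x y : H, 0 ≤ ⟪F x - F y, x - y⟫)
    (hFuc : ∀ S : Set H, Bornology.IsBounded S → UniformContinuousOn F S)
    (w z : ℕ → H) (p : H)
    (hbdd : Bornology.IsBounded (Set.range w))
    (hweak : ∀ f : H, Tendsto (fun k => ⟪f, w k⟫) atTop (nhds ⟪f, p⟫))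
    -- z k = P_C (w k - F (w k)), via the variational characterization of the projection
    (hzmem : ∀ k, z k ∈ C)
    (hzproj : ∀ k, ∀ v ∈ C, ⟪(w k - F (w k)) - z k, v - z k⟫ ≤ 0)
    (hlim : Tendsto (fun k => ‖w k - z k‖) atTop (nhds 0)) :
    p ∈ C ∧ ∀ v ∈ C, 0 ≤ ⟪F p, v - p⟫ := by
  have hwz : Tendsto (fun k => w k - z k) atTop (𝓝 0) :=
    tendsto_zero_iff_norm_tendsto_zero.2 hlim
  have hz : TendstoWeakly z atTop p := TendstoWeakly.of_tendsto_sub hweak hwz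
  have hzbdd : IsBounded (range z) :=
    (isBounded_sub hbdd (Metric.isBounded_range_of_tendsto _ hwz)).subset
      (range_subset_iff.2 fun k => ⟨w k, mem_range_self k, w k - z k, mem_range_self k,
        sub_sub_cancel _ _⟩)
  have hFwz : Tendsto (fun k => F (w k) - F (z k)) atTop (𝓝 0) := by
    refine tendsto_zero_iff_norm_tendsto_zero.2 ?_
    simpa only [dist_eq_norm] using (hFuc _ (hbdd.union hzbdd)).tendsto_dist_zero
      (fun k => .inl (mem_range_self k)) (fun k => .inr (mem_range_self k))
      (by simpa only [dist_eq_norm] using hlim)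
  have hpC : p ∈ C := hz.mem_of_isClosed_of_convex hCcl hCcx hzmem
  have hFp : ContinuousAt F p :=
    (hFuc _ Metric.isBounded_closedBall).continuousOn.continuousAt
      (Metric.closedBall_mem_nhds p one_pos)
  refine ⟨hpC, inner_nonneg_of_forall_inner_nonneg hCcx hpC hFp fun v hv => ?_⟩
  exact inner_nonneg_of_tendsto_residual hFmono (fun k => hzproj k v hv) hz hzbdd
    (by simpa using hwz.sub hFwz)

/-- A weak limit of a bounded sequence `{w_k}` with `‖w_k − P_C(w_k − F(w_k))‖ → 0`
belongs to the solution set of VI(F,C). -/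
theorem statement8
    {H : Type*} [NormedAddCommGroup H] [InnerProductSpace ℝ H] [CompleteSpace H]
    (C : Set H) (hCne : C.Nonempty) (hCcl : IsClosed C) (hCcx : Convex ℝ C)
    (F : H → H)
    (hFmono : ∀ x y : H, 0 ≤ ⟪F x - F y, x - y⟫)
    (hFuc : ∀ S : Set H, Bornology.IsBounded S → UniformContinuousOn F S)
    (w z : ℕ → H) (p : H)
    (hbdd : Bornology.IsBounded (Set.range w))
    (hweak : ∀ f : H, Tendsto (fun k => ⟪f, w k⟫) atTop (nhds ⟪f, p⟫))
    -- z k = P_C (w k - F (w k)), via the variational characterization of the projection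
    (hzmem : ∀ k, z k ∈ C)
    (hzproj : ∀ k, ∀ v ∈ C, ⟪(w k - F (w k)) - z k, v - z k⟫ ≤ 0)
    (hlim : Tendsto (fun k => ‖w k - z k‖) atTop (nhds 0)) :
    p ∈ C ∧ ∀ v ∈ C, 0 ≤ ⟪F p, v - p⟫ :=
  statement8_general C hCcl hCcx F hFmono hFuc w z p hbdd hweak hzmem hzproj hlim
end

section
/- Let {ψ_n}, {δ_n}, {α_n} be sequences in [0, +∞) such that ψ_{n+1} ≤ ψ_n + α_n(ψ_n − ψ_{n−1}) + δ_n for all n ≥ 1, ∑_{n=1}^∞ δ_n < +∞, and there exists α ∈ [0,1) with 0 ≤ α_n ≤ α for all n ≥ 1. Then (i) ∑_{n≥1} max{ψ_n − ψ_{n−1}, 0} < +∞, and (ii) there exists ψ* ∈ [0, +∞) such that ψ_n → ψ*. -/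
open Filter Topology

/-- Alvarez's lemma: if `ψ_{n+1} ≤ ψ_n + α_n(ψ_n − ψ_{n−1}) + δ_n` with `∑ δ_n < ∞`
and `0 ≤ α_n ≤ α < 1`, then `∑ max{ψ_n − ψ_{n−1}, 0} < ∞` and `ψ_n` converges to
some `ψ* ∈ [0, ∞)`. -/
theorem statement17
    (ψ δ αseq : ℕ → ℝ)
    (hψ : ∀ n, 0 ≤ ψ n) (hδ : ∀ n, 0 ≤ δ n) (hαnn : ∀ n, 0 ≤ αseq n)
    (hrec : ∀ n, 1 ≤ n → ψ (n + 1) ≤ ψ n + αseq n * (ψ n - ψ (n - 1)) + δ n)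
    (hsum : Summable δ)
    (α : ℝ) (hα0 : 0 ≤ α) (hα1 : α < 1) (hαle : ∀ n, 1 ≤ n → αseq n ≤ α) :
    Summable (fun n => max (ψ (n + 1) - ψ n) 0) ∧
      ∃ ψs : ℝ, 0 ≤ ψs ∧ Tendsto ψ atTop (nhds ψs) := by
  set θ : ℕ → ℝ := fun n => max (ψ (n + 1) - ψ n) 0 with hθdef
  have hθnn : ∀ n, 0 ≤ θ n := fun n => le_max_right _ _
  have hθge : ∀ n, ψ (n + 1) - ψ n ≤ θ n := fun n => le_max_left _ _
  have hstep : ∀ i, θ (i + 1) ≤ α * θ i + δ (i + 1) := by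
    intro i
    have h1 := hrec (i + 1) (Nat.le_add_left 1 i)
    simp only [Nat.add_sub_cancel] at h1
    have h2 : αseq (i + 1) * (ψ (i + 1) - ψ i) ≤ α * θ i :=
      calc αseq (i + 1) * (ψ (i + 1) - ψ i) ≤ αseq (i + 1) * θ i :=
            mul_le_mul_of_nonneg_left (hθge i) (hαnn _)
        _ ≤ α * θ i :=
            mul_le_mul_of_nonneg_right (hαle _ (Nat.le_add_left 1 i)) (hθnn i)
    have h3 : 0 ≤ α * θ i + δ (i + 1) := add_nonneg (mul_nonneg hα0 (hθnn i)) (hδ _)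
    exact max_le (by linarith) h3
  have hDnn : 0 ≤ ∑' n, δ n := tsum_nonneg hδ
  have hsumθ : Summable θ := by
    apply summable_of_sum_range_le (c := (θ 0 + ∑' n, δ n) / (1 - α)) hθnn
    intro N
    have key : ∑ i ∈ Finset.range N, θ i
        ≤ θ 0 + α * ∑ i ∈ Finset.range N, θ i + ∑' n, δ n := by
      cases N with
      | zero =>
        simp only [Finset.range_zero, Finset.sum_empty, mul_zero, add_zero]
        have := hθnn 0
        linarith
      | succ M =>
        have hsplit := Finset.sum_range_succ' θ M
        have hA : ∑ i ∈ Finset.range M, θ (i + 1)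
            ≤ ∑ i ∈ Finset.range M, (α * θ i + δ (i + 1)) :=
          Finset.sum_le_sum (fun i _ => hstep i)
        rw [Finset.sum_add_distrib, ← Finset.mul_sum] at hA
        have hB : ∑ i ∈ Finset.range M, θ i ≤ ∑ i ∈ Finset.range (M + 1), θ i :=
          Finset.sum_le_sum_of_subset_of_nonneg
            (Finset.range_subset_range.2 (Nat.le_succ M)) (fun i _ _ => hθnn i)
        have hC : ∑ i ∈ Finset.range M, δ (i + 1) ≤ ∑' n, δ n := by
          have h1 : ∑ i ∈ Finset.range M, δ (i + 1)
              ≤ ∑ i ∈ Finset.range (M + 1), δ i := by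
            rw [Finset.sum_range_succ']
            have := hδ 0
            linarith
          exact h1.trans (Summable.sum_le_tsum _ (fun i _ => hδ i) hsum)
        have hαmul : α * ∑ i ∈ Finset.range M, θ i
            ≤ α * ∑ i ∈ Finset.range (M + 1), θ i :=
          mul_le_mul_of_nonneg_left hB hα0
        linarith [hA, hC, hαmul, hsplit]
    rw [le_div_iff₀ (by linarith : (0:ℝ) < 1 - α)]
    nlinarith [key]
  refine ⟨hsumθ, ?_⟩
  set S : ℕ → ℝ := fun n => ∑ i ∈ Finset.range n, θ i with hSdef
  have hw : Antitone (fun n => ψ n - S n) := by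
    apply antitone_nat_of_succ_le
    intro n
    have h1 : S (n + 1) = S n + θ n := Finset.sum_range_succ θ n
    have := hθge n
    simp only [h1]
    linarith
  have hbdd : BddBelow (Set.range fun n => ψ n - S n) := by
    refine ⟨-(∑' n, θ n), ?_⟩
    rintro x ⟨n, rfl⟩
    have h1 : S n ≤ ∑' n, θ n := Summable.sum_le_tsum _ (fun i _ => hθnn i) hsumθ
    have := hψ n
    simp only
    linarith
  have hL : Tendsto (fun n => ψ n - S n) atTop (𝓝 (⨅ n, (ψ n - S n))) :=
    tendsto_atTop_ciInf hw hbdd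
  have hS : Tendsto S atTop (𝓝 (∑' n, θ n)) := hsumθ.hasSum.tendsto_sum_nat
  have hψt : Tendsto ψ atTop (𝓝 ((⨅ n, (ψ n - S n)) + ∑' n, θ n)) := by
    have := hL.add hS
    exact this.congr (fun n => by simp)
  refine ⟨_, ?_, hψt⟩
  exact ge_of_tendsto' hψt (fun n => hψ n)
end

section
/- Let C be a nonempty subset of H and {x_n} a sequence in H such that (i) for every x ∈ C, lim_{n→∞} ‖x_n − x‖ exists, and (ii) every weak sequential cluster point of {x_n} belongs to C. Then {x_n} converges weakly to a point of C. -/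
/-!
Since `‖x n - c‖` converges for some `c ∈ C`, the sequence is bounded, so by the sequential
Banach–Alaoglu theorem (applied in the separable closed span of the sequence, with Riesz
representation) it has a weak sequential cluster point, which lies in `C`. Two cluster points
`p, q ∈ C` coincide (Opial's argument): expanding the squares, `⟪q - p, x n⟫` is an affine
combination of `‖x n - p‖²` and `‖x n - q‖²`, hence converges, and its limit equals both
`⟪q - p, p⟫` and `⟪q - p, q⟫`, so `‖q - p‖² = 0`. A bounded sequence with a unique weak
sequential cluster point converges weakly to it, because every subsequence has a further
subsequence converging weakly to that point.
-/

open scoped RealInnerProductSpace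
open Filter Topology

theorem exists_norm_le_of_tendsto_norm_sub {E : Type*} [SeminormedAddGroup E] {x : ℕ → E}
    {c : E} {l : ℝ} (hl : Tendsto (fun n => ‖x n - c‖) atTop (𝓝 l)) : ∃ M, ∀ n, ‖x n‖ ≤ M := by
  obtain ⟨B, hB⟩ := hl.bddAbove_range
  refine ⟨B + ‖c‖, fun n => ?_⟩
  calc ‖x n‖ = ‖x n - c + c‖ := by rw [sub_add_cancel]
    _ ≤ ‖x n - c‖ + ‖c‖ := norm_add_le _ _
    _ ≤ B + ‖c‖ := by gcongr; exact hB ⟨n, rfl⟩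

section

variable {H : Type*} [NormedAddCommGroup H] [InnerProductSpace ℝ H]

def IsWeakSeqClusterPt (x : ℕ → H) (p : H) : Prop :=
  ∃ φ : ℕ → ℕ, StrictMono φ ∧ ∀ f : H, Tendsto (fun j => ⟪f, x (φ j)⟫) atTop (𝓝 ⟪f, p⟫)

theorem IsWeakSeqClusterPt.of_comp {x : ℕ → H} {ψ : ℕ → ℕ} {p : H} (hψ : StrictMono ψ)
    (hp : IsWeakSeqClusterPt (x ∘ ψ) p) : IsWeakSeqClusterPt x p := by
  obtain ⟨φ, hφ, hlim⟩ := hp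
  exact ⟨ψ ∘ φ, hψ.comp hφ, hlim⟩

theorem IsWeakSeqClusterPt.inner_eq_of_tendsto {x : ℕ → H} {p v : H} {t : ℝ}
    (hp : IsWeakSeqClusterPt x p) (ht : Tendsto (fun n => ⟪v, x n⟫) atTop (𝓝 t)) :
    ⟪v, p⟫ = t := by
  obtain ⟨φ, hφ, hlim⟩ := hp
  exact tendsto_nhds_unique (hlim v) (ht.comp hφ.tendsto_atTop)

theorem separableSpace_topologicalClosure_span_range (x : ℕ → H) :
    TopologicalSpace.SeparableSpace (Submodule.span ℝ (Set.range x)).topologicalClosure := by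
  have hsep := ((Set.countable_range x).isSeparable.span (R := ℝ)).closure
  rw [← Submodule.topologicalClosure_coe] at hsep
  exact hsep.separableSpace

theorem exists_isWeakSeqClusterPt_of_norm_le [CompleteSpace H] (x : ℕ → H) (M : ℝ)
    (hM : ∀ n, ‖x n‖ ≤ M) : ∃ p, IsWeakSeqClusterPt x p := by
  set K := (Submodule.span ℝ (Set.range x)).topologicalClosure
  have : TopologicalSpace.SeparableSpace K := separableSpace_topologicalClosure_span_range x
  have hxK : ∀ n, x n ∈ K := fun n =>
    Submodule.le_topologicalClosure _ (Submodule.subset_span ⟨n, rfl⟩)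
  let y : ℕ → WeakDual ℝ K := fun n =>
    StrongDual.toWeakDual (InnerProductSpace.toDual ℝ K ⟨x n, hxK n⟩)
  have hy : ∀ n, y n ∈ WeakDual.toStrongDual ⁻¹' Metric.closedBall 0 M := fun n => by
    simp only [y, Set.mem_preimage, Metric.mem_closedBall]
    exact (dist_zero_right _).trans_le
      ((LinearIsometryEquiv.norm_map (InnerProductSpace.toDual ℝ K) ⟨x n, hxK n⟩).trans_le (hM n))
  obtain ⟨Λ, -, φ, hφ, hΛ⟩ := WeakDual.isSeqCompact_closedBall ℝ K 0 M hy
  set p := (InnerProductSpace.toDual ℝ K).symm (WeakDual.toStrongDual Λ)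
  refine ⟨p, φ, hφ, fun f => ?_⟩
  -- Test the weak-* limit against the projection of `f` onto `K`; `x n` and `p` lie in `K`.
  have hΛf : Λ (K.orthogonalProjectionOnto f) = ⟪(p : H), f⟫ := by
    rw [← Submodule.inner_orthogonalProjectionOnto_eq_of_mem_left,
      InnerProductSpace.toDual_symm_apply]
    rfl
  have key := ((WeakDual.eval_continuous (K.orthogonalProjectionOnto f)).tendsto Λ).comp hΛ
  simp only [Function.comp_def, y, hΛf] at key
  simpa [InnerProductSpace.toDual_apply_apply, real_inner_comm f] using key

theorem tendsto_inner_of_forall_isWeakSeqClusterPt_eq [CompleteSpace H] {x : ℕ → H} {M : ℝ}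
    (hM : ∀ n, ‖x n‖ ≤ M) {p : H} (huniq : ∀ q, IsWeakSeqClusterPt x q → q = p) (f : H) :
    Tendsto (fun n => ⟪f, x n⟫) atTop (𝓝 ⟪f, p⟫) := by
  refine tendsto_of_subseq_tendsto fun ns hns => ?_
  obtain ⟨ψ, -, hψ⟩ := strictMono_subseq_of_tendsto_atTop hns
  obtain ⟨q, θ, hθ, hq⟩ := exists_isWeakSeqClusterPt_of_norm_le (x ∘ ns ∘ ψ) M fun n => hM _
  have hqp : q = p := huniq q (IsWeakSeqClusterPt.of_comp hψ ⟨θ, hθ, hq⟩)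
  exact ⟨ψ ∘ θ, hqp ▸ hq f⟩

theorem IsWeakSeqClusterPt.eq_of_tendsto_norm_sub {x : ℕ → H} {p q : H} {a b : ℝ}
    (hp : IsWeakSeqClusterPt x p) (hq : IsWeakSeqClusterPt x q)
    (ha : Tendsto (fun n => ‖x n - p‖) atTop (𝓝 a))
    (hb : Tendsto (fun n => ‖x n - q‖) atTop (𝓝 b)) : p = q := by
  set t := (a ^ 2 - b ^ 2 - ‖p‖ ^ 2 + ‖q‖ ^ 2) / 2
  have hexpand : ∀ n, ⟪q - p, x n⟫ = (‖x n - p‖ ^ 2 - ‖x n - q‖ ^ 2 - ‖p‖ ^ 2 + ‖q‖ ^ 2) / 2 := by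
    intro n
    rw [norm_sub_sq_real, norm_sub_sq_real, inner_sub_left, real_inner_comm q, real_inner_comm p]
    ring
  have ht : Tendsto (fun n => ⟪q - p, x n⟫) atTop (𝓝 t) := by
    simp only [hexpand]
    exact ((((ha.pow 2).sub (hb.pow 2)).sub_const _).add_const _).div_const 2
  have hsq : ‖q - p‖ ^ 2 = 0 := by
    rw [← real_inner_self_eq_norm_sq, inner_sub_right, hq.inner_eq_of_tendsto ht,
      hp.inner_eq_of_tendsto ht, sub_self]
  exact (sub_eq_zero.mp (pow_eq_zero_iff two_ne_zero |>.mp hsq |> norm_eq_zero.mp)).symm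

end

/-- Opial-type lemma: if `‖x_n − x‖` converges for every `x ∈ C` and every weak
sequential cluster point of `{x_n}` lies in `C`, then `{x_n}` converges weakly to
a point of `C`. -/
theorem statement18
    {H : Type*} [NormedAddCommGroup H] [InnerProductSpace ℝ H] [CompleteSpace H]
    (C : Set H) (hCne : C.Nonempty) (x : ℕ → H)
    (h1 : ∀ c ∈ C, ∃ l : ℝ, Tendsto (fun n => ‖x n - c‖) atTop (nhds l))
    (h2 : ∀ p : H, (∃ φ : ℕ → ℕ, StrictMono φ ∧
        ∀ f : H, Tendsto (fun j => ⟪f, x (φ j)⟫) atTop (nhds ⟪f, p⟫)) → p ∈ C) :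
    ∃ p ∈ C, ∀ f : H, Tendsto (fun n => ⟪f, x n⟫) atTop (nhds ⟪f, p⟫) := by
  obtain ⟨c, hc⟩ := hCne
  obtain ⟨M, hM⟩ := exists_norm_le_of_tendsto_norm_sub (h1 c hc).choose_spec
  obtain ⟨p, hp⟩ := exists_isWeakSeqClusterPt_of_norm_le x M hM
  have hpC : p ∈ C := h2 p hp
  have huniq : ∀ q, IsWeakSeqClusterPt x q → q = p := fun q hq =>
    hq.eq_of_tendsto_norm_sub hp (h1 q (h2 q hq)).choose_spec (h1 p hpC).choose_spec
  exact ⟨p, hpC, tendsto_inner_of_forall_isWeakSeqClusterPt_eq hM huniq⟩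
end
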